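/- Let β be a non-negative integer, let t > 0, and let ρ ≥ 2√t. Then ∫_ρ^∞ s^β e^{-s²/(4t)} ds ≤ 2e · ⌈(β−1)/2⌉! · ρ^{β−1} · t · e^{-ρ²/(4t)}. (Here ⌈(β−1)/2⌉ denotes the ceiling of (β−1)/2, which equals 0 when β = 0, and n! denotes the factorial.) -/

import Mathlib

/-!
Write `E(s) = e^{-s²/(4t)}` and `I_b = ∫_ρ^∞ s^b E(s) ds`. Differentiating `s^{b+1} E(s)` and
integrating over `(ρ, ∞)` gives the recursion `I_{b+2} = 2t ρ^{b+1} E(ρ) + 2t (b+1) I_b`, with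
`I_1 = 2t E(ρ)` and `ρ I_0 ≤ I_1`. Since `4t ≤ ρ²`, each step of the recursion costs at most a
factor `(b/2 + 1) ρ²`, so by induction `ρ I_b ≤ c_{⌊b/2⌋} ρ^b t E(ρ)`, where `c_0 = 2` and
`c_{k+1} = 2 + (k+1) c_k`. Finally `c_k = 2 k! ∑_{j ≤ k} 1/j! ≤ 2e k!`.
-/

open MeasureTheory Set Real Filter Finset
open scoped Topology Nat

noncomputable def gaussianTailMoment (t : ℝ) (b : ℕ) (ρ : ℝ) : ℝ :=
  ∫ s in Ioi ρ, s ^ b * exp (-s ^ 2 / (4 * t))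

section GaussianTailMoment

variable {t : ℝ}

lemma rpow_natCast_mul_exp_neg_mul_sq_eq (t : ℝ) (n : ℕ) (s : ℝ) :
    s ^ (n : ℝ) * exp (-(1 / (4 * t)) * s ^ 2) = s ^ n * exp (-s ^ 2 / (4 * t)) := by
  rw [rpow_natCast]
  ring_nf

lemma integrableOn_pow_mul_exp_neg_sq_div (ht : 0 < t) (n : ℕ) (ρ : ℝ) :
    IntegrableOn (fun s : ℝ => s ^ n * exp (-s ^ 2 / (4 * t))) (Ioi ρ) := by
  have hn : (-1 : ℝ) < n := neg_one_lt_zero.trans_le n.cast_nonneg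
  exact ((integrable_rpow_mul_exp_neg_mul_sq (by positivity) hn).integrableOn).congr_fun
    (fun s _ => rpow_natCast_mul_exp_neg_mul_sq_eq t n s) measurableSet_Ioi

lemma tendsto_pow_mul_exp_neg_sq_div_atTop (ht : 0 < t) (n : ℕ) :
    Tendsto (fun s : ℝ => s ^ n * exp (-s ^ 2 / (4 * t))) atTop (𝓝 0) := by
  have hexp : Tendsto (fun s : ℝ => exp (-(1 / 2) * s)) atTop (𝓝 0) :=
    tendsto_exp_atBot.comp ((tendsto_const_mul_atBot_of_neg (by norm_num)).mpr tendsto_id)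
  exact ((rpow_mul_exp_neg_mul_sq_isLittleO_exp_neg (by positivity) n).trans_tendsto
    hexp).congr (rpow_natCast_mul_exp_neg_mul_sq_eq t n)

lemma hasDerivAt_pow_mul_exp_neg_sq_div (t : ℝ) (n : ℕ) (x : ℝ) :
    HasDerivAt (fun s : ℝ => s ^ n * exp (-s ^ 2 / (4 * t)))
      (n * (x ^ (n - 1) * exp (-x ^ 2 / (4 * t))) -
        (2 * t)⁻¹ * (x ^ (n + 1) * exp (-x ^ 2 / (4 * t)))) x := by
  have hE : HasDerivAt (fun s : ℝ => exp (-s ^ 2 / (4 * t)))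
      (-(x / (2 * t)) * exp (-x ^ 2 / (4 * t))) x := by
    have hq : HasDerivAt (fun s : ℝ => -s ^ 2 / (4 * t)) (-(2 * x) / (4 * t)) x := by
      simpa using ((hasDerivAt_pow 2 x).neg).div_const (4 * t)
    convert hq.exp using 1
    ring
  exact ((hasDerivAt_pow n x).mul hE).congr_deriv (by ring)

/-- For `n = 0` the truncated `n - 1` is harmless: its term carries the factor `n = 0`. -/
lemma gaussianTailMoment_succ (ht : 0 < t) (n : ℕ) (ρ : ℝ) :
    gaussianTailMoment t (n + 1) ρ =
      2 * t * (ρ ^ n * exp (-ρ ^ 2 / (4 * t)) + n * gaussianTailMoment t (n - 1) ρ) := by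
  have hint := integrableOn_pow_mul_exp_neg_sq_div ht
  have h := integral_Ioi_of_hasDerivAt_of_tendsto'
    (fun x _ => hasDerivAt_pow_mul_exp_neg_sq_div t n x)
    (((hint (n - 1) ρ).const_mul _).sub ((hint (n + 1) ρ).const_mul _))
    (tendsto_pow_mul_exp_neg_sq_div_atTop ht n)
  rw [integral_sub ((hint (n - 1) ρ).const_mul _) ((hint (n + 1) ρ).const_mul _),
    integral_const_mul, integral_const_mul] at h
  unfold gaussianTailMoment
  field_simp at h ⊢
  linarith

lemma mul_gaussianTailMoment_le_succ (ht : 0 < t) {ρ : ℝ} (hρ : 0 ≤ ρ) (n : ℕ) :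
    ρ * gaussianTailMoment t n ρ ≤ gaussianTailMoment t (n + 1) ρ := by
  have hint := integrableOn_pow_mul_exp_neg_sq_div ht
  rw [gaussianTailMoment, gaussianTailMoment, ← integral_const_mul]
  refine setIntegral_mono_on ((hint n ρ).const_mul ρ) (hint (n + 1) ρ) measurableSet_Ioi
    fun s hs => ?_
  have hs0 : 0 ≤ s ^ n * exp (-s ^ 2 / (4 * t)) :=
    mul_nonneg (pow_nonneg (hρ.trans hs.le) n) (exp_pos _).le
  calc ρ * (s ^ n * exp (-s ^ 2 / (4 * t))) ≤ s * (s ^ n * exp (-s ^ 2 / (4 * t))) := by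
        gcongr; exact hs.le
    _ = s ^ (n + 1) * exp (-s ^ 2 / (4 * t)) := by ring

end GaussianTailMoment

def gaussianTailConst : ℕ → ℕ
  | 0 => 2
  | k + 1 => 2 + (k + 1) * gaussianTailConst k

lemma gaussianTailConst_eq (k : ℕ) :
    (gaussianTailConst k : ℝ) = 2 * k ! * ∑ j ∈ range (k + 1), 1 / (j ! : ℝ) := by
  induction k with
  | zero => simp [gaussianTailConst]
  | succ k ih =>
    rw [gaussianTailConst, sum_range_succ, Nat.factorial_succ]
    push_cast [ih]
    field_simp
    ring

lemma gaussianTailConst_le (k : ℕ) : (gaussianTailConst k : ℝ) ≤ 2 * exp 1 * k ! := by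
  have hsum := sum_le_exp_of_nonneg zero_le_one (k + 1)
  simp only [one_pow] at hsum
  rw [gaussianTailConst_eq]
  nlinarith [(Nat.cast_pos (α := ℝ)).mpr k.factorial_pos]

lemma mul_gaussianTailMoment_le {t ρ : ℝ} (ht : 0 < t) (hρ : 0 < ρ) (h4t : 4 * t ≤ ρ ^ 2)
    (b : ℕ) : ρ * gaussianTailMoment t b ρ ≤
      gaussianTailConst (b / 2) * ρ ^ b * t * exp (-ρ ^ 2 / (4 * t)) := by
  induction b using Nat.twoStepInduction with
  | zero =>
    calc ρ * gaussianTailMoment t 0 ρ ≤ gaussianTailMoment t 1 ρ :=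
          mul_gaussianTailMoment_le_succ ht hρ.le 0
      _ = _ := by simp [gaussianTailMoment_succ ht 0, gaussianTailConst]
  | one => exact le_of_eq (by simp [gaussianTailMoment_succ ht 0, gaussianTailConst]; ring)
  | more b ih _ =>
    set c : ℝ := (gaussianTailConst (b / 2) : ℝ)
    set E := exp (-ρ ^ 2 / (4 * t))
    have hcoef : 2 * t * ((b : ℝ) + 1) * t ≤ ((b / 2 : ℕ) + 1) * ρ ^ 2 * t := by
      have hb : (b : ℝ) + 1 ≤ 2 * ((b / 2 : ℕ) + 1) := by
        exact_mod_cast (by omega : b + 1 ≤ 2 * (b / 2 + 1))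
      nlinarith [mul_le_mul_of_nonneg_left hb (by positivity : 0 ≤ 2 * t * t),
        mul_le_mul_of_nonneg_left h4t (by positivity : (0 : ℝ) ≤ ((b / 2 : ℕ) + 1) * t)]
    have hcE : 0 ≤ c * ρ ^ b * E := by positivity
    rw [gaussianTailMoment_succ ht (b + 1), show (b + 2) / 2 = b / 2 + 1 by omega,
      gaussianTailConst, Nat.add_sub_cancel]
    calc ρ * (2 * t * (ρ ^ (b + 1) * E + ↑(b + 1) * gaussianTailMoment t b ρ))
        = 2 * t * ρ ^ (b + 2) * E + 2 * t * ((b : ℝ) + 1) * (ρ * gaussianTailMoment t b ρ) := by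
          push_cast; ring
      _ ≤ 2 * t * ρ ^ (b + 2) * E + 2 * t * ((b : ℝ) + 1) * (c * ρ ^ b * t * E) := by gcongr
      _ = 2 * t * ρ ^ (b + 2) * E + (2 * t * ((b : ℝ) + 1) * t) * (c * ρ ^ b * E) := by ring
      _ ≤ 2 * t * ρ ^ (b + 2) * E + (((b / 2 : ℕ) + 1) * ρ ^ 2 * t) * (c * ρ ^ b * E) := by
          gcongr
      _ = ↑(2 + (b / 2 + 1) * gaussianTailConst (b / 2)) * ρ ^ (b + 2) * t * E := by
          push_cast; ring

lemma natCeil_natCast_sub_one_div_two (n : ℕ) : ⌈((n : ℝ) - 1) / 2⌉₊ = n / 2 := by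
  refine le_antisymm (Nat.ceil_le.mpr ?_) ?_
  · have h : n ≤ n / 2 * 2 + 1 := by omega
    rw [div_le_iff₀ two_pos, sub_le_iff_le_add]
    exact_mod_cast h
  · have h := Nat.le_ceil (((n : ℝ) - 1) / 2)
    rw [div_le_iff₀ two_pos, sub_le_iff_le_add] at h
    have h' : n ≤ ⌈((n : ℝ) - 1) / 2⌉₊ * 2 + 1 := by exact_mod_cast h
    omega

/-- Lemma 2.4: if `β` is a non-negative integer and `ρ ≥ 2√t` (with `t > 0`), then
`∫_ρ^∞ s^β e^{-s²/(4t)} ds ≤ 2e ⌈(β-1)/2⌉! ρ^{β-1} t e^{-ρ²/(4t)}`. -/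
theorem integral_Ioi_pow_mul_gaussian_le
    (β : ℕ) (t ρ : ℝ) (ht : 0 < t) (hρ : 2 * Real.sqrt t ≤ ρ) :
    (∫ s in Set.Ioi ρ, s ^ β * Real.exp (-s ^ 2 / (4 * t))) ≤
      2 * Real.exp 1 * (Nat.factorial ⌈((β : ℝ) - 1) / 2⌉₊) * ρ ^ ((β : ℝ) - 1) * t *
        Real.exp (-ρ ^ 2 / (4 * t)) := by
  have hρ0 : 0 < ρ := (mul_pos two_pos (sqrt_pos.mpr ht)).trans_le hρ
  have h4t : 4 * t ≤ ρ ^ 2 := by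
    nlinarith [sq_sqrt ht.le, sqrt_nonneg t]
  rw [natCeil_natCast_sub_one_div_two, rpow_sub_one hρ0.ne', rpow_natCast]
  calc ∫ s in Ioi ρ, s ^ β * exp (-s ^ 2 / (4 * t))
      ≤ gaussianTailConst (β / 2) * ρ ^ β * t * exp (-ρ ^ 2 / (4 * t)) / ρ :=
        (le_div_iff₀' hρ0).mpr (mul_gaussianTailMoment_le ht hρ0 h4t β)
    _ ≤ 2 * exp 1 * (β / 2)! * ρ ^ β * t * exp (-ρ ^ 2 / (4 * t)) / ρ := by
        gcongr
        exact gaussianTailConst_le _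
    _ = _ := by ring
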